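/- arXiv:1901.10122 — 12 statements merged into one kernel-verified Lean document; each statement's English description precedes it below -/
import Mathlib

section
/- Let α ∈ ℝ and let I ⊆ ℝ be an open interval. Suppose q : I → ℝ is twice differentiable and satisfies the second Painlevé equation q''(z) = 2q(z)³ + z·q(z) + α on I. Define p(z) := q'(z) + q(z)² + z/2 and suppose p(z) ≠ 0 for all z ∈ I. Then p satisfies equation P34: p''(z) = (p'(z))²/(2p(z)) + 2p(z)² − z·p(z) − (α + 1/2)²/(2p(z)) on I. -/
/-- If `q` solves the second Painlevé equation `q'' = 2q³ + zq + α` on an open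
interval `(a,b)` and `p := q' + q² + z/2` is nonvanishing there, then `p` solves
equation P34: `p'' = (p')²/(2p) + 2p² − zp − (α + 1/2)²/(2p)`. -/
theorem stmt_0 (α a b : ℝ) (q : ℝ → ℝ)
    (hq1 : ∀ z ∈ Set.Ioo a b, DifferentiableAt ℝ q z)
    (hq2 : ∀ z ∈ Set.Ioo a b, DifferentiableAt ℝ (deriv q) z)
    (hPII : ∀ z ∈ Set.Ioo a b, deriv (deriv q) z = 2 * q z ^ 3 + z * q z + α)
    (p : ℝ → ℝ) (hp : ∀ z, p z = deriv q z + q z ^ 2 + z / 2)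
    (hpne : ∀ z ∈ Set.Ioo a b, p z ≠ 0) :
    ∀ z ∈ Set.Ioo a b,
      deriv (deriv p) z =
        (deriv p z) ^ 2 / (2 * p z) + 2 * p z ^ 2 - z * p z
          - (α + 1 / 2) ^ 2 / (2 * p z) := by
  have hpeq : p = fun z => deriv q z + q z ^ 2 + z / 2 := funext hp
  -- p is differentiable on the interval, with explicit derivative
  have hd1 : ∀ z ∈ Set.Ioo a b,
      HasDerivAt p (deriv (deriv q) z + 2 * q z * deriv q z + 1 / 2) z := by
    intro z hz
    rw [hpeq]
    have h1 := (hq2 z hz).hasDerivAt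
    have h2 : HasDerivAt (fun x => q x ^ 2) (2 * q z * deriv q z) z := by
      have := ((hq1 z hz).hasDerivAt).fun_pow 2
      simpa using this
    have h3 : HasDerivAt (fun x : ℝ => x / 2) (1 / 2) z := by
      simpa using (hasDerivAt_id z).div_const 2
    exact (h1.add h2).add h3
  -- first derivative of p on the interval
  have hderivp : ∀ z ∈ Set.Ioo a b, deriv p z = 2 * q z * p z + (α + 1 / 2) := by
    intro z hz
    rw [(hd1 z hz).deriv, hPII z hz, hp z]
    ring
  intro z hz
  -- compute second derivative via local equality of derivatives
  have heq : deriv p =ᶠ[nhds z] fun x => 2 * q x * p x + (α + 1 / 2) :=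
    Filter.eventually_of_mem (isOpen_Ioo.mem_nhds hz) hderivp
  have hd2 : HasDerivAt (fun x => 2 * q x * p x + (α + 1 / 2))
      (2 * deriv q z * p z + 2 * q z * deriv p z) z := by
    have h1 : HasDerivAt (fun x => 2 * q x) (2 * deriv q z) z :=
      (hq1 z hz).hasDerivAt.const_mul 2
    have h2 : HasDerivAt p (deriv p z) z := ((hd1 z hz).differentiableAt).hasDerivAt
    exact (h1.mul h2).add_const _
  have key : deriv (deriv p) z = 2 * deriv q z * p z + 2 * q z * deriv p z := by
    rw [heq.deriv_eq, hd2.deriv]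
  rw [key, hderivp z hz]
  have hq' : deriv q z = p z - q z ^ 2 - z / 2 := by rw [hp z]; ring
  rw [hq']
  have hne := hpne z hz
  field_simp
  ring
end

section
/- Let α ∈ ℝ and let I ⊆ ℝ be an open interval. Suppose p : I → ℝ is twice differentiable, p(z) ≠ 0 for all z ∈ I, and p satisfies equation P34: p''(z) = (p'(z))²/(2p(z)) + 2p(z)² − z·p(z) − (α + 1/2)²/(2p(z)) on I. Then q(z) := (p'(z) − α − 1/2)/(2p(z)) satisfies the second Painlevé equation q''(z) = 2q(z)³ + z·q(z) + α on I. -/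
/-- If `p` is a nonvanishing solution of equation P34
`p'' = (p')²/(2p) + 2p² − zp − (α + 1/2)²/(2p)` on an open interval `(a,b)`,
then `q := (p' − α − 1/2)/(2p)` solves the second Painlevé equation
`q'' = 2q³ + zq + α`. -/
theorem stmt_1 (α a b : ℝ) (p : ℝ → ℝ)
    (hp1 : ∀ z ∈ Set.Ioo a b, DifferentiableAt ℝ p z)
    (hp2 : ∀ z ∈ Set.Ioo a b, DifferentiableAt ℝ (deriv p) z)
    (hpne : ∀ z ∈ Set.Ioo a b, p z ≠ 0)
    (hP34 : ∀ z ∈ Set.Ioo a b,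
      deriv (deriv p) z =
        (deriv p z) ^ 2 / (2 * p z) + 2 * p z ^ 2 - z * p z
          - (α + 1 / 2) ^ 2 / (2 * p z))
    (q : ℝ → ℝ) (hq : ∀ z, q z = (deriv p z - α - 1 / 2) / (2 * p z)) :
    ∀ z ∈ Set.Ioo a b,
      deriv (deriv q) z = 2 * q z ^ 3 + z * q z + α := by
  have hqf : q = fun z => (deriv p z - α - 1 / 2) / (2 * p z) := funext hq
  -- key: HasDerivAt q (-q z^2 + p z - z/2) z for z in Ioo
  have key : ∀ z ∈ Set.Ioo a b, HasDerivAt q (-(q z)^2 + p z - z/2) z := by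
    intro z hz
    have hp := (hp1 z hz).hasDerivAt
    have hp' := (hp2 z hz).hasDerivAt
    have hne : (2 : ℝ) * p z ≠ 0 := by
      have := hpne z hz; positivity
    have hnum : HasDerivAt (fun z => deriv p z - α - 1 / 2) (deriv (deriv p) z) z :=
      (hp'.sub_const α).sub_const (1/2)
    have hden : HasDerivAt (fun z => 2 * p z) (2 * deriv p z) z := hp.const_mul 2
    have hd : HasDerivAt (fun z => (deriv p z - α - 1 / 2) / (2 * p z)) _ z := hnum.div hden hne
    rw [← hqf] at hd
    convert hd using 1
    rw [hq z, hP34 z hz]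
    have hpz := hpne z hz
    field_simp
    ring
  intro z hz
  have hopen : Set.Ioo a b ∈ nhds z := (isOpen_Ioo).mem_nhds hz
  have hDq : deriv q =ᶠ[nhds z] fun z => -(q z)^2 + p z - z/2 := by
    filter_upwards [hopen] with y hy
    exact (key y hy).deriv
  rw [Filter.EventuallyEq.deriv_eq hDq]
  have hqd : HasDerivAt (fun z => -(q z)^2 + p z - z/2)
      (-(2 * q z * (-(q z)^2 + p z - z/2)) + deriv p z - 1/2) z := by
    have h1 : HasDerivAt (fun z => (q z)^2) (2 * q z * (-(q z)^2 + p z - z/2)) z := by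
      have : HasDerivAt (fun z => q z ^ 2) _ z := (key z hz).pow 2
      simpa [mul_comm, mul_assoc, mul_left_comm] using this
    have h2 : HasDerivAt (fun z => z/2) (1/2 : ℝ) z := by
      simpa using (hasDerivAt_id z).div_const 2
    exact (h1.neg.add (hp1 z hz).hasDerivAt).sub h2
  rw [hqd.deriv]
  have hpz := hpne z hz
  rw [hq z]
  field_simp
  ring
end

section
/- Let α ∈ ℝ and let I ⊆ ℝ be an open interval. Suppose q, p : I → ℝ are differentiable and satisfy the Hamiltonian system q'(z) = p(z) − q(z)² − z/2 and p'(z) = 2q(z)p(z) + α + 1/2 on I. Define σ(z) := p(z)²/2 − (q(z)² + z/2)p(z) − (α + 1/2)q(z). Then σ is twice differentiable and satisfies the second Painlevé σ-equation (σ''(z))² + 4(σ'(z))³ + 2σ'(z)(z·σ'(z) − σ(z)) = (α + 1/2)²/4 on I. -/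
/-- If `(q, p)` solve the Hamiltonian system `q' = p − q² − z/2`,
`p' = 2qp + α + 1/2` on an open interval `(a,b)`, then the Hamiltonian
`σ := p²/2 − (q² + z/2)p − (α + 1/2)q` is twice differentiable and satisfies
the second Painlevé σ-equation `(σ'')² + 4(σ')³ + 2σ'(zσ' − σ) = (α + 1/2)²/4`. -/
theorem stmt_3 (α a b : ℝ) (q p : ℝ → ℝ)
    (hq1 : ∀ z ∈ Set.Ioo a b, DifferentiableAt ℝ q z)
    (hp1 : ∀ z ∈ Set.Ioo a b, DifferentiableAt ℝ p z)
    (hsys1 : ∀ z ∈ Set.Ioo a b, deriv q z = p z - q z ^ 2 - z / 2)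
    (hsys2 : ∀ z ∈ Set.Ioo a b, deriv p z = 2 * q z * p z + α + 1 / 2)
    (σ : ℝ → ℝ)
    (hσ : ∀ z, σ z = p z ^ 2 / 2 - (q z ^ 2 + z / 2) * p z - (α + 1 / 2) * q z) :
    ∀ z ∈ Set.Ioo a b,
      DifferentiableAt ℝ σ z ∧ DifferentiableAt ℝ (deriv σ) z ∧
        (deriv (deriv σ) z) ^ 2 + 4 * (deriv σ z) ^ 3
          + 2 * deriv σ z * (z * deriv σ z - σ z) = (α + 1 / 2) ^ 2 / 4 := by
  have key : ∀ w ∈ Set.Ioo a b, HasDerivAt σ (-(p w) / 2) w := by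
    intro w hw
    have hq := (hq1 w hw).hasDerivAt
    have hp := (hp1 w hw).hasDerivAt
    rw [hsys1 w hw] at hq
    rw [hsys2 w hw] at hp
    set Q := p w - q w ^ 2 - w / 2 with hQ
    set P := 2 * q w * p w + α + 1 / 2 with hP
    have h1 : HasDerivAt (fun z => p z ^ 2 / 2) (2 * p w ^ 1 * P / 2) w :=
      (hp.pow 2).div_const 2
    have h2 : HasDerivAt (fun z => q z ^ 2 + z / 2) (2 * q w ^ 1 * Q + 1 / 2) w :=
      (hq.pow 2).add ((hasDerivAt_id w).div_const 2)
    have h3 : HasDerivAt (fun z => (q z ^ 2 + z / 2) * p z)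
        ((2 * q w ^ 1 * Q + 1 / 2) * p w + (q w ^ 2 + w / 2) * P) w := h2.mul hp
    have h4 : HasDerivAt (fun z => (α + 1 / 2) * q z) ((α + 1 / 2) * Q) w :=
      hq.const_mul _
    have h5 : HasDerivAt (fun z => p z ^ 2 / 2 - (q z ^ 2 + z / 2) * p z - (α + 1 / 2) * q z)
        (2 * p w ^ 1 * P / 2 - ((2 * q w ^ 1 * Q + 1 / 2) * p w + (q w ^ 2 + w / 2) * P)
          - (α + 1 / 2) * Q) w := (h1.sub h3).sub h4
    have hfun : σ = fun z => p z ^ 2 / 2 - (q z ^ 2 + z / 2) * p z - (α + 1 / 2) * q z :=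
      funext hσ
    rw [hfun]
    convert h5 using 1
    rw [hP, hQ]; ring
  intro z hz
  have hzo : Set.Ioo a b ∈ nhds z := (isOpen_Ioo).mem_nhds hz
  have hev : deriv σ =ᶠ[nhds z] (fun w => -(p w) / 2) :=
    Filter.eventually_of_mem hzo fun w hw => (key w hw).deriv
  have hd2 : HasDerivAt (fun w => -(p w) / 2) (-(2 * q z * p z + α + 1 / 2) / 2) z := by
    have hp := (hp1 z hz).hasDerivAt
    rw [hsys2 z hz] at hp
    exact hp.neg.div_const 2
  refine ⟨(key z hz).differentiableAt, ?_, ?_⟩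
  · exact hd2.differentiableAt.congr_of_eventuallyEq hev
  · have e1 : deriv σ z = -(p z) / 2 := (key z hz).deriv
    have e2 : deriv (deriv σ) z = -(2 * q z * p z + α + 1 / 2) / 2 := by
      rw [hev.deriv_eq]; exact hd2.deriv
    rw [e1, e2, hσ z]; ring
end

section
/- Let α ∈ ℝ and let I ⊆ ℝ be an open interval. Suppose σ : I → ℝ is three times differentiable, σ'(z) ≠ 0 and σ''(z) ≠ 0 for all z ∈ I, and σ satisfies the second Painlevé σ-equation (σ''(z))² + 4(σ'(z))³ + 2σ'(z)(z·σ'(z) − σ(z)) = (α + 1/2)²/4 on I. Then q(z) := (4σ''(z) + 2α + 1)/(8σ'(z)) satisfies the second Painlevé equation q''(z) = 2q(z)³ + z·q(z) + α on I, and p(z) := −2σ'(z) satisfies equation P34: p''(z) = (p'(z))²/(2p(z)) + 2p(z)² − z·p(z) − (α + 1/2)²/(2p(z)) on I. -/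
/-- If `σ` is a solution of the second Painlevé σ-equation
`(σ'')² + 4(σ')³ + 2σ'(zσ' − σ) = (α + 1/2)²/4` on an open interval `(a,b)`,
with `σ'` and `σ''` nonvanishing there, then `q := (4σ'' + 2α + 1)/(8σ')`
solves the second Painlevé equation `q'' = 2q³ + zq + α` and `p := −2σ'`
solves equation P34: `p'' = (p')²/(2p) + 2p² − zp − (α + 1/2)²/(2p)`. -/
theorem stmt_4 (α a b : ℝ) (σ : ℝ → ℝ)
    (hσ1 : ∀ z ∈ Set.Ioo a b, DifferentiableAt ℝ σ z)
    (hσ2 : ∀ z ∈ Set.Ioo a b, DifferentiableAt ℝ (deriv σ) z)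
    (hσ3 : ∀ z ∈ Set.Ioo a b, DifferentiableAt ℝ (deriv (deriv σ)) z)
    (hσ1ne : ∀ z ∈ Set.Ioo a b, deriv σ z ≠ 0)
    (hσ2ne : ∀ z ∈ Set.Ioo a b, deriv (deriv σ) z ≠ 0)
    (hSII : ∀ z ∈ Set.Ioo a b,
      (deriv (deriv σ) z) ^ 2 + 4 * (deriv σ z) ^ 3
        + 2 * deriv σ z * (z * deriv σ z - σ z) = (α + 1 / 2) ^ 2 / 4)
    (q p : ℝ → ℝ)
    (hq : ∀ z, q z = (4 * deriv (deriv σ) z + 2 * α + 1) / (8 * deriv σ z))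
    (hp : ∀ z, p z = -2 * deriv σ z) :
    ∀ z ∈ Set.Ioo a b,
      deriv (deriv q) z = 2 * q z ^ 3 + z * q z + α ∧
      deriv (deriv p) z =
        (deriv p z) ^ 2 / (2 * p z) + 2 * p z ^ 2 - z * p z
          - (α + 1 / 2) ^ 2 / (2 * p z) := by
  have hfq : q = fun t => (4 * deriv (deriv σ) t + 2 * α + 1) / (8 * deriv σ t) := funext hq
  have hfp : p = fun t => -2 * deriv σ t := funext hp
  -- third derivative formula on the interval
  have hw : ∀ x ∈ Set.Ioo a b, deriv (deriv (deriv σ)) x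
      = σ x - 6 * (deriv σ x) ^ 2 - 2 * x * deriv σ x := by
    intro x hx
    have hOx : Set.Ioo a b ∈ nhds x := isOpen_Ioo.mem_nhds hx
    have hu : HasDerivAt σ (deriv σ x) x := (hσ1 x hx).hasDerivAt
    have hv : HasDerivAt (deriv σ) (deriv (deriv σ) x) x := (hσ2 x hx).hasDerivAt
    have hw3 : HasDerivAt (deriv (deriv σ)) (deriv (deriv (deriv σ)) x) x :=
      (hσ3 x hx).hasDerivAt
    have hH : (fun t => (deriv (deriv σ) t) ^ 2 + 4 * (deriv σ t) ^ 3
        + 2 * deriv σ t * (t * deriv σ t - σ t))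
        =ᶠ[nhds x] fun _ => (α + 1 / 2) ^ 2 / 4 :=
      Filter.eventuallyEq_of_mem hOx (fun t ht => hSII t ht)
    have hder : HasDerivAt (fun t => (deriv (deriv σ) t) ^ 2 + 4 * (deriv σ t) ^ 3
        + 2 * deriv σ t * (t * deriv σ t - σ t))
        ((2 : ℕ) * deriv (deriv σ) x ^ 1 * deriv (deriv (deriv σ)) x
          + 4 * ((3 : ℕ) * deriv σ x ^ 2 * deriv (deriv σ) x)
          + ((2 * deriv (deriv σ) x) * (x * deriv σ x - σ x)
            + (2 * deriv σ x) * ((1 * deriv σ x + x * deriv (deriv σ) x) - deriv σ x))) x := by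
      exact ((hw3.pow 2).add ((hv.pow 3).const_mul 4)).add
        ((hv.const_mul 2).mul (((hasDerivAt_id x).mul hv).sub hu))
    have h0 : ((2 : ℕ) * deriv (deriv σ) x ^ 1 * deriv (deriv (deriv σ)) x
          + 4 * ((3 : ℕ) * deriv σ x ^ 2 * deriv (deriv σ) x)
          + ((2 * deriv (deriv σ) x) * (x * deriv σ x - σ x)
            + (2 * deriv σ x) * ((1 * deriv σ x + x * deriv (deriv σ) x) - deriv σ x))) = 0 := by
      have := hH.deriv_eq
      rw [hder.deriv, deriv_const] at this
      exact this
    have h2 : (2 * deriv (deriv σ) x) * (deriv (deriv (deriv σ)) x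
        - (σ x - 6 * (deriv σ x) ^ 2 - 2 * x * deriv σ x)) = 0 := by
      push_cast at h0
      linear_combination h0
    rcases mul_eq_zero.mp h2 with h | h
    · exact absurd (by linarith : deriv (deriv σ) x = 0) (hσ2ne x hx)
    · linarith
  intro z hz
  have hO : Set.Ioo a b ∈ nhds z := isOpen_Ioo.mem_nhds hz
  have hune : deriv σ z ≠ 0 := hσ1ne z hz
  have hS := hSII z hz
  constructor
  · -- Painlevé II for q
    -- abbreviation R for deriv q on the interval
    set R : ℝ → ℝ := fun x => (4 * σ x * deriv σ x - 24 * (deriv σ x) ^ 3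
        - 8 * x * (deriv σ x) ^ 2 - 4 * (deriv (deriv σ) x) ^ 2
        - (2 * α + 1) * (deriv (deriv σ) x)) / (8 * (deriv σ x) ^ 2) with hR
    have hq1 : ∀ x ∈ Set.Ioo a b, deriv q x = R x := by
      intro x hx
      have hv : HasDerivAt (deriv σ) (deriv (deriv σ) x) x := (hσ2 x hx).hasDerivAt
      have hw3 : HasDerivAt (deriv (deriv σ)) (deriv (deriv (deriv σ)) x) x :=
        (hσ3 x hx).hasDerivAt
      have hne : (8 : ℝ) * deriv σ x ≠ 0 := by
        have := hσ1ne x hx; positivity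
      have hqd : HasDerivAt q
          (((4 * deriv (deriv (deriv σ)) x) * (8 * deriv σ x)
            - (4 * deriv (deriv σ) x + 2 * α + 1) * (8 * deriv (deriv σ) x))
            / (8 * deriv σ x) ^ 2) x := by
        rw [hfq]
        have hnum : HasDerivAt (fun t => 4 * deriv (deriv σ) t + 2 * α + 1)
            (4 * deriv (deriv (deriv σ)) x) x := by
          exact ((hw3.const_mul 4).add_const (2 * α)).add_const 1
        exact hnum.div (hv.const_mul 8) hne
      rw [hqd.deriv, hR, hw x hx]
      have hux := hσ1ne x hx
      field_simp
      ring
    have hEq : deriv q =ᶠ[nhds z] R := Filter.eventuallyEq_of_mem hO hq1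
    have hu : HasDerivAt σ (deriv σ z) z := (hσ1 z hz).hasDerivAt
    have hv : HasDerivAt (deriv σ) (deriv (deriv σ) z) z := (hσ2 z hz).hasDerivAt
    have hv3 : HasDerivAt (deriv (deriv σ)) (deriv (deriv (deriv σ)) z) z :=
      (hσ3 z hz).hasDerivAt
    have hBne : (8 : ℝ) * (deriv σ z) ^ 2 ≠ 0 := by positivity
    have hA : HasDerivAt (fun x => 4 * σ x * deriv σ x - 24 * (deriv σ x) ^ 3
        - 8 * x * (deriv σ x) ^ 2 - 4 * (deriv (deriv σ) x) ^ 2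
        - (2 * α + 1) * (deriv (deriv σ) x))
        (((4 * deriv σ z) * deriv σ z + (4 * σ z) * deriv (deriv σ) z)
          - 24 * ((3 : ℕ) * deriv σ z ^ 2 * deriv (deriv σ) z)
          - ((8 * 1) * (deriv σ z) ^ 2 + (8 * z) * ((2 : ℕ) * deriv σ z ^ 1 * deriv (deriv σ) z))
          - 4 * ((2 : ℕ) * deriv (deriv σ) z ^ 1 * deriv (deriv (deriv σ)) z)
          - (2 * α + 1) * deriv (deriv (deriv σ)) z) z := by
      exact (((((hu.const_mul 4).mul hv).sub ((hv.pow 3).const_mul 24)).sub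
        (((hasDerivAt_id z).const_mul 8).mul (hv.pow 2))).sub
        ((hv3.pow 2).const_mul 4)).sub (hv3.const_mul (2 * α + 1))
    have hB : HasDerivAt (fun x => 8 * (deriv σ x) ^ 2)
        (8 * ((2 : ℕ) * deriv σ z ^ 1 * deriv (deriv σ) z)) z := (hv.pow 2).const_mul 8
    have hRd : HasDerivAt R _ z := hA.div hB hBne
    have hqq : deriv (deriv q) z = deriv R z := hEq.deriv_eq
    rw [hqq, hRd.deriv, hq z, hw z hz]
    push_cast
    field_simp
    linear_combination (32 * (12 * deriv (deriv σ) z + 2 * α + 1)) * hS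
  · -- P34 for p
    have hp1 : ∀ x, deriv p x = -2 * deriv (deriv σ) x := by
      intro x
      rw [hfp]
      exact deriv_const_mul_field _
    have hp2 : deriv (deriv p) z = -2 * deriv (deriv (deriv σ)) z := by
      rw [funext hp1]
      exact deriv_const_mul_field _
    rw [hp2, hp1 z, hp z, hw z hz]
    field_simp
    linear_combination 16 * hS
end

section
/- Suppose y : (0,∞) → ℝ is twice differentiable, y(x) ≠ 0 for all x > 0, and y satisfies y''(x) = (y'(x))²/y(x) − y'(x)/x + y(x)³ − 1/x on (0,∞). Define w : (0,∞) → ℝ by w(z) := x^{1/3}·y(x) where x := (2z/3)^{3/2}. Then w satisfies the Tzitzéica reduction equation w''(z) = (w'(z))²/w(z) − w'(z)/z + w(z)³ − 1 on (0,∞). -/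
/-- If `y` solves the degenerate third Painlevé equation
`y'' = (y')²/y − y'/x + y³ − 1/x` on `(0,∞)` and is nonvanishing there, then
`w(z) := x^(1/3) y(x)` with `x := (2z/3)^(3/2)` solves the Tzitzéica reduction
equation `w'' = (w')²/w − w'/z + w³ − 1` on `(0,∞)`. -/
theorem stmt_5 (y : ℝ → ℝ)
    (hy1 : ∀ x ∈ Set.Ioi (0 : ℝ), DifferentiableAt ℝ y x)
    (hy2 : ∀ x ∈ Set.Ioi (0 : ℝ), DifferentiableAt ℝ (deriv y) x)
    (hyne : ∀ x ∈ Set.Ioi (0 : ℝ), y x ≠ 0)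
    (hPIII7 : ∀ x ∈ Set.Ioi (0 : ℝ),
      deriv (deriv y) x =
        (deriv y x) ^ 2 / y x - deriv y x / x + y x ^ 3 - 1 / x)
    (w : ℝ → ℝ)
    (hw : ∀ z, w z = ((2 * z / 3) ^ ((3 : ℝ) / 2)) ^ ((1 : ℝ) / 3)
        * y ((2 * z / 3) ^ ((3 : ℝ) / 2))) :
    ∀ z ∈ Set.Ioi (0 : ℝ),
      deriv (deriv w) z =
        (deriv w z) ^ 2 / w z - deriv w z / z + w z ^ 3 - 1 := by
  -- auxiliary functions
  set W : ℝ → ℝ := fun t => (2*t/3) ^ ((1:ℝ)/2) * y ((2*t/3) ^ ((3:ℝ)/2)) with hWdef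
  set W1 : ℝ → ℝ := fun t => 1/3 * (2*t/3) ^ (-(1:ℝ)/2) * y ((2*t/3) ^ ((3:ℝ)/2))
      + (2*t/3) * deriv y ((2*t/3) ^ ((3:ℝ)/2)) with hW1def
  -- basic facts for t > 0
  have hb : ∀ t : ℝ, 0 < t → (0:ℝ) < 2*t/3 := by intro t ht; linarith
  have hlin : ∀ t : ℝ, HasDerivAt (fun s : ℝ => 2*s/3) (2/3) t := by
    intro t
    have h : (fun s : ℝ => 2*s/3) = fun s : ℝ => (2/3) * s := by funext s; ring
    rw [h]
    simpa using (hasDerivAt_id t).const_mul ((2:ℝ)/3)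
  have hXpos : ∀ t : ℝ, 0 < t → (0:ℝ) < (2*t/3) ^ ((3:ℝ)/2) := by
    intro t ht; exact Real.rpow_pos_of_pos (hb t ht) _
  have hxD : ∀ t : ℝ, 0 < t →
      HasDerivAt (fun s : ℝ => (2*s/3) ^ ((3:ℝ)/2)) ((2*t/3) ^ ((1:ℝ)/2)) t := by
    intro t ht
    have h := (hlin t).rpow_const (p := (3:ℝ)/2) (Or.inl (ne_of_gt (hb t ht)))
    convert h using 1
    rw [show (3:ℝ)/2 - 1 = 1/2 by norm_num]
    ring
  have hYc : ∀ t : ℝ, 0 < t →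
      HasDerivAt (fun s : ℝ => y ((2*s/3) ^ ((3:ℝ)/2)))
        (deriv y ((2*t/3) ^ ((3:ℝ)/2)) * (2*t/3) ^ ((1:ℝ)/2)) t := by
    intro t ht
    exact HasDerivAt.comp t ((hy1 _ (hXpos t ht)).hasDerivAt) (hxD t ht)
  have hPc : ∀ t : ℝ, 0 < t →
      HasDerivAt (fun s : ℝ => deriv y ((2*s/3) ^ ((3:ℝ)/2)))
        (deriv (deriv y) ((2*t/3) ^ ((3:ℝ)/2)) * (2*t/3) ^ ((1:ℝ)/2)) t := by
    intro t ht
    exact HasDerivAt.comp t ((hy2 _ (hXpos t ht)).hasDerivAt) (hxD t ht)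
  have huD : ∀ t : ℝ, 0 < t →
      HasDerivAt (fun s : ℝ => (2*s/3) ^ ((1:ℝ)/2)) (1/3 * (2*t/3) ^ (-(1:ℝ)/2)) t := by
    intro t ht
    have h := (hlin t).rpow_const (p := (1:ℝ)/2) (Or.inl (ne_of_gt (hb t ht)))
    convert h using 1
    rw [show (1:ℝ)/2 - 1 = -(1/2) by norm_num]
    ring_nf
  -- w agrees with W on Ioi 0
  have hwW : Set.EqOn w W (Set.Ioi 0) := by
    intro t ht
    have hbt := hb t ht
    rw [hw t, hWdef]
    have : ((2*t/3) ^ ((3:ℝ)/2)) ^ ((1:ℝ)/3) = (2*t/3) ^ ((1:ℝ)/2) := by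
      rw [← Real.rpow_mul hbt.le]
      norm_num
    rw [this]
  -- deriv W = W1 on Ioi 0
  have hWD : ∀ t : ℝ, 0 < t →
      HasDerivAt W (1/3 * (2*t/3) ^ (-(1:ℝ)/2) * y ((2*t/3) ^ ((3:ℝ)/2))
        + (2*t/3) ^ ((1:ℝ)/2) * (deriv y ((2*t/3) ^ ((3:ℝ)/2)) * (2*t/3) ^ ((1:ℝ)/2))) t := by
    intro t ht
    exact (huD t ht).mul (hYc t ht)
  have hderivW : Set.EqOn (deriv W) W1 (Set.Ioi 0) := by
    intro t ht
    have ht' : (0:ℝ) < t := ht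
    have e4t : (2*t/3) ^ ((1:ℝ)/2) * (2*t/3) ^ ((1:ℝ)/2) = 2*t/3 := by
      rw [← Real.rpow_add (hb t ht')]
      norm_num
    rw [(hWD t ht').deriv, hW1def]
    linear_combination deriv y ((2*t/3) ^ ((3:ℝ)/2)) * e4t
  intro z hz
  have hz' : (0:ℝ) < z := hz
  have hmem : Set.Ioi (0:ℝ) ∈ nhds z := isOpen_Ioi.mem_nhds hz
  have h1 : w =ᶠ[nhds z] W := Filter.eventuallyEq_of_mem hmem hwW
  have h2 : deriv w =ᶠ[nhds z] W1 :=
    h1.deriv.trans (Filter.eventuallyEq_of_mem hmem hderivW)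
  have hdw : deriv w z = W1 z := h2.eq_of_nhds
  have hwz : w z = W z := hwW hz
  have hddw : deriv (deriv w) z = deriv W1 z := h2.deriv_eq
  -- second derivative of W1 at z
  have hbz := hb z hz'
  have hrD : HasDerivAt (fun s : ℝ => (2*s/3) ^ (-(1:ℝ)/2))
      (2/3 * (-(1:ℝ)/2) * (2*z/3) ^ (-(1:ℝ)/2 - 1)) z :=
    (hlin z).rpow_const (Or.inl (ne_of_gt hbz))
  have hW1D : HasDerivAt W1
      ((1/3 * (2/3 * (-(1:ℝ)/2) * (2*z/3) ^ (-(1:ℝ)/2 - 1))) * y ((2*z/3) ^ ((3:ℝ)/2))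
        + (1/3 * (2*z/3) ^ (-(1:ℝ)/2)) * (deriv y ((2*z/3) ^ ((3:ℝ)/2)) * (2*z/3) ^ ((1:ℝ)/2))
        + (2/3 * deriv y ((2*z/3) ^ ((3:ℝ)/2))
          + (2*z/3) * (deriv (deriv y) ((2*z/3) ^ ((3:ℝ)/2)) * (2*z/3) ^ ((1:ℝ)/2)))) z := by
    exact ((hrD.const_mul (1/3)).mul (hYc z hz')).add ((hlin z).mul (hPc z hz'))
  rw [hddw, hW1D.deriv, hdw, hwz, hWdef, hW1def]
  simp only
  -- algebraic identities
  have e2 : (2*z/3) ^ (-(1:ℝ)/2) = ((2*z/3) ^ ((1:ℝ)/2))⁻¹ := by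
    rw [show -(1:ℝ)/2 = -(1/2) by norm_num, Real.rpow_neg hbz.le]
  have e1 : (2*z/3) ^ (-(1:ℝ)/2 - 1) = ((2*z/3) ^ ((3:ℝ)/2))⁻¹ := by
    rw [show -(1:ℝ)/2 - 1 = -((3:ℝ)/2) by norm_num, Real.rpow_neg hbz.le]
  have e4 : ((2*z/3) ^ ((1:ℝ)/2)) ^ 2 = 2*z/3 := by
    rw [← Real.rpow_natCast ((2*z/3) ^ ((1:ℝ)/2)) 2, ← Real.rpow_mul hbz.le]
    norm_num
  have e3 : ((2*z/3) ^ ((1:ℝ)/2)) ^ 3 = (2*z/3) ^ ((3:ℝ)/2) := by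
    rw [← Real.rpow_natCast ((2*z/3) ^ ((1:ℝ)/2)) 3, ← Real.rpow_mul hbz.le]
    norm_num
  set U := (2*z/3) ^ ((1:ℝ)/2) with hU
  set X := (2*z/3) ^ ((3:ℝ)/2) with hX
  have hXpos' : (0:ℝ) < X := hXpos z hz'
  have hQ := hPIII7 X hXpos'
  have hYne : y X ≠ 0 := hyne X hXpos'
  have hU0 : (0:ℝ) < U := Real.rpow_pos_of_pos hbz _
  have hzU : z = 3/2 * U^2 := by rw [e4]; ring
  have hXU : X = U^3 := e3.symm
  have hYne' : y (U^3) ≠ 0 := hXU ▸ hYne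
  rw [e1, e2, hQ, hXU, show 2*z/3 = U^2 from e4.symm, hzU]
  have hUne : U ≠ 0 := ne_of_gt hU0
  field_simp
  ring
end

section
/- Let n ∈ ℝ and let I ⊆ (0,∞) be an open interval. Suppose φ : I → ℝ is twice differentiable, φ(r) ≠ 1 and φ(r) ≠ −1 and φ(r) ≠ 0 for all r ∈ I, and φ satisfies the radial complex sine-Gordon equation φ''(r) + φ'(r)/r + (φ(r)/(1 − φ(r)²))·((φ'(r))² − n²/r²) + φ(r)(1 − φ(r)²) = 0 on I. Define u(z) := (φ(z/2) − 1)/(φ(z/2) + 1) for z with z/2 ∈ I. Then u satisfies the fifth Painlevé equation u'' = (1/(2u) + 1/(u−1))(u')² − u'/z + ((u−1)²/z²)(αu + β/u) + γu/z + δu(u+1)/(u−1) with parameters α = n²/8, β = −n²/8, γ = 0, δ = −1/2. -/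
set_option maxHeartbeats 2000000


/-- If `φ` solves the radial complex sine-Gordon equation
`φ'' + φ'/r + (φ/(1−φ²))((φ')² − n²/r²) + φ(1−φ²) = 0` on an open interval
`(a,b) ⊆ (0,∞)`, with `φ` avoiding the values `1`, `−1` and `0`, then
`u(z) := (φ(z/2) − 1)/(φ(z/2) + 1)` solves the fifth Painlevé equation with
parameters `α = n²/8`, `β = −n²/8`, `γ = 0`, `δ = −1/2`. -/
theorem stmt_6 (n a b : ℝ) (hI : Set.Ioo a b ⊆ Set.Ioi (0 : ℝ)) (φ : ℝ → ℝ)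
    (hφ1 : ∀ r ∈ Set.Ioo a b, DifferentiableAt ℝ φ r)
    (hφ2 : ∀ r ∈ Set.Ioo a b, DifferentiableAt ℝ (deriv φ) r)
    (hne1 : ∀ r ∈ Set.Ioo a b, φ r ≠ 1)
    (hne2 : ∀ r ∈ Set.Ioo a b, φ r ≠ -1)
    (hne0 : ∀ r ∈ Set.Ioo a b, φ r ≠ 0)
    (hCSG : ∀ r ∈ Set.Ioo a b,
      deriv (deriv φ) r + deriv φ r / r
        + (φ r / (1 - φ r ^ 2)) * ((deriv φ r) ^ 2 - n ^ 2 / r ^ 2)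
        + φ r * (1 - φ r ^ 2) = 0)
    (u : ℝ → ℝ) (hu : ∀ z, u z = (φ (z / 2) - 1) / (φ (z / 2) + 1)) :
    ∀ z : ℝ, z / 2 ∈ Set.Ioo a b →
      deriv (deriv u) z =
        (1 / (2 * u z) + 1 / (u z - 1)) * (deriv u z) ^ 2 - deriv u z / z
          + ((u z - 1) ^ 2 / z ^ 2) * ((n ^ 2 / 8) * u z + (-(n ^ 2 / 8)) / u z)
          + (0 : ℝ) * u z / z
          + (-(1 : ℝ) / 2) * u z * (u z + 1) / (u z - 1) := by
  have hu' : u = fun w => (φ (w / 2) - 1) / (φ (w / 2) + 1) := funext hu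
  have h2 : ∀ w : ℝ, HasDerivAt (fun x : ℝ => x / 2) (1 / 2) w := by
    intro w; simpa using (hasDerivAt_id w).div_const 2
  have key : ∀ w : ℝ, w / 2 ∈ Set.Ioo a b →
      HasDerivAt u (deriv φ (w / 2) / (φ (w / 2) + 1) ^ 2) w := by
    intro w hw
    have hc : HasDerivAt (fun x => φ (x / 2)) (deriv φ (w / 2) * (1 / 2)) w :=
      ((hφ1 _ hw).hasDerivAt).comp w (h2 w)
    have hden : φ (w / 2) + 1 ≠ 0 := by
      intro h; exact hne2 _ hw (by linarith)
    have hd := (hc.sub_const 1).fun_div (hc.add_const 1) hden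
    rw [hu']
    convert hd using 1
    · rfl
    · rfl
    field_simp
    ring
  intro z hz
  have hzpos : (0:ℝ) < z / 2 := hI hz
  have hz0 : z ≠ 0 := by linarith
  set p := φ (z / 2) with hp
  set p' := deriv φ (z / 2) with hp'
  set p'' := deriv (deriv φ) (z / 2) with hp''
  have hden : p + 1 ≠ 0 := by
    intro h; exact hne2 _ hz (by linarith)
  have hden1 : p - 1 ≠ 0 := sub_ne_zero.mpr (hne1 _ hz)
  have hp0 : p ≠ 0 := hne0 _ hz
  -- deriv u at z
  have hdu : deriv u z = p' / (p + 1) ^ 2 := (key z hz).deriv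
  -- deriv u in a neighborhood
  have hS : IsOpen {w : ℝ | w / 2 ∈ Set.Ioo a b} :=
    isOpen_Ioo.preimage (continuous_id.div_const 2)
  have heq : deriv u =ᶠ[nhds z] fun w => deriv φ (w / 2) / (φ (w / 2) + 1) ^ 2 := by
    filter_upwards [hS.mem_nhds hz] with w hw using (key w hw).deriv
  have hnum : HasDerivAt (fun w => deriv φ (w / 2)) (p'' * (1 / 2)) z :=
    by have := ((hφ2 _ hz).hasDerivAt).comp z (h2 z); exact this
  have hcz : HasDerivAt (fun x => φ (x / 2)) (p' * (1 / 2)) z :=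
    ((hφ1 _ hz).hasDerivAt).comp z (h2 z)
  have hdenf : HasDerivAt (fun w => (φ (w / 2) + 1) ^ 2)
      (2 * (p + 1) ^ 1 * (p' * (1 / 2))) z := by
    simpa using ((hcz.add_const 1).fun_pow 2)
  have hden2 : (p + 1) ^ 2 ≠ 0 := pow_ne_zero 2 hden
  have hdd : HasDerivAt (fun w => deriv φ (w / 2) / (φ (w / 2) + 1) ^ 2)
      ((p'' * (1 / 2) * (p + 1) ^ 2 - p' * (2 * (p + 1) ^ 1 * (p' * (1 / 2)))) /
        ((p + 1) ^ 2) ^ 2) z := hnum.div hdenf hden2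
  have hddu : deriv (deriv u) z =
      (p'' * (1 / 2) * (p + 1) ^ 2 - p' * (2 * (p + 1) ^ 1 * (p' * (1 / 2)))) /
        ((p + 1) ^ 2) ^ 2 := by
    rw [heq.deriv_eq]; exact hdd.deriv
  -- CSG equation
  have hcsg := hCSG _ hz
  have h1mp2 : 1 - p ^ 2 ≠ 0 := by
    intro h
    have : (1 - p) * (1 + p) = 0 := by ring_nf; linarith [h]
    rcases mul_eq_zero.mp this with h' | h'
    · exact hne1 _ hz (by linarith)
    · exact hne2 _ hz (by linarith)
  have hr0 : (z / 2 : ℝ) ≠ 0 := ne_of_gt hzpos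
  have hdiv1 : p' / (z / 2) = p' * 2 / z := by
    rw [div_div_eq_mul_div]
  have hdiv2 : n ^ 2 / (z / 2) ^ 2 = n ^ 2 * 4 / z ^ 2 := by
    rw [div_pow, div_div_eq_mul_div]
    norm_num
  rw [← hp, ← hp', ← hp'', hdiv1, hdiv2] at hcsg
  have hpp : p'' = -(p' * 2 / z) - (p / (1 - p ^ 2)) * (p' ^ 2 - n ^ 2 * 4 / z ^ 2)
      - p * (1 - p ^ 2) := by linarith
  have e1 : u z = (p - 1) / (p + 1) := hu z
  have e2 : u z - 1 = (-2) / (p + 1) := by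
    rw [e1, div_sub_one hden]; ring_nf
  have e3 : u z + 1 = (2 * p) / (p + 1) := by
    rw [e1, div_add_one hden]; ring_nf
  rw [hddu, hdu, hpp, e2, e3, e1]
  field_simp
  ring
end

section
/- Let n ∈ ℝ and let I ⊆ (0,∞) be an open interval. Suppose φ : I → ℝ is twice differentiable, φ(r) ≠ 0 and φ(r)² ≠ 1 for all r ∈ I, and φ satisfies the radial complex sine-Gordon equation φ''(r) + φ'(r)/r + (φ(r)/(1 − φ(r)²))·((φ'(r))² − n²/r²) + φ(r)(1 − φ(r)²) = 0 on I. Define v(z) := φ(√z)²/(φ(√z)² − 1) for z > 0 with √z ∈ I. Then v satisfies the degenerate fifth Painlevé equation v'' = (1/(2v) + 1/(v−1))(v')² − v'/z + ((v−1)²/z²)(αv + β/v) + γv/z with parameters α = n²/2, β = 0, γ = −1/2. -/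
/-- If `φ` solves the radial complex sine-Gordon equation on an open interval
`(a,b) ⊆ (0,∞)`, with `φ ≠ 0` and `φ² ≠ 1`, then `v(z) := φ(√z)²/(φ(√z)² − 1)`
solves the degenerate fifth Painlevé equation with parameters
`α = n²/2`, `β = 0`, `γ = −1/2`. -/
theorem stmt_7 (n a b : ℝ) (hI : Set.Ioo a b ⊆ Set.Ioi (0 : ℝ)) (φ : ℝ → ℝ)
    (hφ1 : ∀ r ∈ Set.Ioo a b, DifferentiableAt ℝ φ r)
    (hφ2 : ∀ r ∈ Set.Ioo a b, DifferentiableAt ℝ (deriv φ) r)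
    (hne0 : ∀ r ∈ Set.Ioo a b, φ r ≠ 0)
    (hne1 : ∀ r ∈ Set.Ioo a b, φ r ^ 2 ≠ 1)
    (hCSG : ∀ r ∈ Set.Ioo a b,
      deriv (deriv φ) r + deriv φ r / r
        + (φ r / (1 - φ r ^ 2)) * ((deriv φ r) ^ 2 - n ^ 2 / r ^ 2)
        + φ r * (1 - φ r ^ 2) = 0)
    (v : ℝ → ℝ)
    (hv : ∀ z, v z = (φ (Real.sqrt z)) ^ 2 / ((φ (Real.sqrt z)) ^ 2 - 1)) :
    ∀ z : ℝ, 0 < z → Real.sqrt z ∈ Set.Ioo a b →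
      deriv (deriv v) z =
        (1 / (2 * v z) + 1 / (v z - 1)) * (deriv v z) ^ 2 - deriv v z / z
          + ((v z - 1) ^ 2 / z ^ 2) * ((n ^ 2 / 2) * v z + (0 : ℝ) / v z)
          + (-(1 : ℝ) / 2) * v z / z := by
  intro z hz hr
  -- the open set where everything is nice
  set S : Set ℝ := Set.Ioi 0 ∩ Real.sqrt ⁻¹' Set.Ioo a b with hSdef
  have hS : IsOpen S := (isOpen_Ioi).inter (isOpen_Ioo.preimage Real.continuous_sqrt)
  have hmemS : z ∈ S := ⟨hz, hr⟩
  -- first derivative of v on S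
  have key : ∀ w ∈ S, HasDerivAt v
      (-(φ (Real.sqrt w) * deriv φ (Real.sqrt w)) /
        (Real.sqrt w * ((φ (Real.sqrt w)) ^ 2 - 1) ^ 2)) w := by
    intro w hw
    obtain ⟨hw0, hwr⟩ := hw
    have hw0' : (0:ℝ) < w := hw0
    have hsw : Real.sqrt w ≠ 0 := ne_of_gt (Real.sqrt_pos.mpr hw0')
    have hsq : HasDerivAt Real.sqrt (1 / (2 * Real.sqrt w)) w :=
      Real.hasDerivAt_sqrt (ne_of_gt hw0')
    have hP : HasDerivAt (fun t => φ (Real.sqrt t))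
        (deriv φ (Real.sqrt w) * (1 / (2 * Real.sqrt w))) w :=
      HasDerivAt.comp w ((hφ1 _ hwr).hasDerivAt) hsq
    have hden_ne : (φ (Real.sqrt w)) ^ 2 - 1 ≠ 0 := sub_ne_zero.mpr (hne1 _ hwr)
    have hquot := (hP.pow 2).div ((hP.pow 2).sub_const 1) hden_ne
    have hveq : v = fun t => (φ (Real.sqrt t)) ^ 2 / ((φ (Real.sqrt t)) ^ 2 - 1) :=
      funext hv
    rw [hveq]
    convert hquot using 1
    · rfl
    · rfl
    · rfl
    simp only [Pi.pow_apply]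
    field_simp
    ring
  have hev : deriv v =ᶠ[nhds z] fun w =>
      -(φ (Real.sqrt w) * deriv φ (Real.sqrt w)) /
        (Real.sqrt w * ((φ (Real.sqrt w)) ^ 2 - 1) ^ 2) := by
    filter_upwards [hS.mem_nhds hmemS] with w hw
    exact (key w hw).deriv
  -- data at z
  have hz0 : z ≠ 0 := ne_of_gt hz
  have hr0 : (0:ℝ) < Real.sqrt z := Real.sqrt_pos.mpr hz
  have hrne : Real.sqrt z ≠ 0 := ne_of_gt hr0
  have hsq : HasDerivAt Real.sqrt (1 / (2 * Real.sqrt z)) z := Real.hasDerivAt_sqrt hz0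
  have hP : HasDerivAt (fun t => φ (Real.sqrt t))
      (deriv φ (Real.sqrt z) * (1 / (2 * Real.sqrt z))) z :=
    HasDerivAt.comp z ((hφ1 _ hr).hasDerivAt) hsq
  have hQ : HasDerivAt (fun t => deriv φ (Real.sqrt t))
      (deriv (deriv φ) (Real.sqrt z) * (1 / (2 * Real.sqrt z))) z :=
    HasDerivAt.comp z ((hφ2 _ hr).hasDerivAt) hsq
  have hden_ne : (φ (Real.sqrt z)) ^ 2 - 1 ≠ 0 := sub_ne_zero.mpr (hne1 _ hr)
  have hden2_ne : Real.sqrt z * ((φ (Real.sqrt z)) ^ 2 - 1) ^ 2 ≠ 0 :=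
    mul_ne_zero hrne (pow_ne_zero 2 hden_ne)
  have hV1' := ((hP.mul hQ).neg).div (hsq.mul (((hP.pow 2).sub_const 1).pow 2)) hden2_ne
  have hd2 := hev.deriv_eq.trans hV1'.deriv
  rw [hd2, (key z hmemS).deriv, hv z]
  simp only [Pi.mul_apply, Pi.pow_apply, Pi.neg_apply, Pi.div_apply]
  -- eliminate the second derivative of φ using the equation
  have hs : deriv (deriv φ) (Real.sqrt z)
      = -(deriv φ (Real.sqrt z) / Real.sqrt z
        + (φ (Real.sqrt z) / (1 - φ (Real.sqrt z) ^ 2)) *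
            ((deriv φ (Real.sqrt z)) ^ 2 - n ^ 2 / (Real.sqrt z) ^ 2)
        + φ (Real.sqrt z) * (1 - φ (Real.sqrt z) ^ 2)) := by
    have := hCSG _ hr
    linarith
  rw [hs]
  have hzr : z = (Real.sqrt z) ^ 2 := (Real.sq_sqrt hz.le).symm
  set r := Real.sqrt z with hrdef
  rw [hzr]
  have hp0 : φ r ≠ 0 := hne0 _ hr
  have hp1 : (1:ℝ) - φ r ^ 2 ≠ 0 := fun h => hden_ne (by linarith [sub_eq_zero.mp h])
  field_simp
  ring
end

section
/- Let n ∈ ℝ and let I ⊆ (0,∞) be an open interval. Suppose φ, ψ : I → ℝ are differentiable with 1 − φ(r)² ≠ 0 for all r ∈ I, and they satisfy the differential-difference pair φ'(r) + (n/r)φ(r) − (1 − φ(r)²)ψ(r) = 0 and ψ'(r) − ((n−1)/r)ψ(r) + (1 − ψ(r)²)φ(r) = 0 on I. Then φ is twice differentiable and satisfies the radial complex sine-Gordon equation φ''(r) + φ'(r)/r + (φ(r)/(1 − φ(r)²))·((φ'(r))² − n²/r²) + φ(r)(1 − φ(r)²) = 0 on I. -/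
/-- If `φ` and `ψ` solve the differential-difference pair
`φ' + (n/r)φ − (1 − φ²)ψ = 0`, `ψ' − ((n−1)/r)ψ + (1 − ψ²)φ = 0` on an open
interval `(a,b) ⊆ (0,∞)` with `1 − φ² ≠ 0`, then `φ` is twice differentiable
and solves the radial complex sine-Gordon equation
`φ'' + φ'/r + (φ/(1−φ²))((φ')² − n²/r²) + φ(1−φ²) = 0`. -/
theorem stmt_9 (n a b : ℝ) (hI : Set.Ioo a b ⊆ Set.Ioi (0 : ℝ)) (φ ψ : ℝ → ℝ)
    (hφ1 : ∀ r ∈ Set.Ioo a b, DifferentiableAt ℝ φ r)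
    (hψ1 : ∀ r ∈ Set.Ioo a b, DifferentiableAt ℝ ψ r)
    (hne : ∀ r ∈ Set.Ioo a b, 1 - φ r ^ 2 ≠ 0)
    (hdd1 : ∀ r ∈ Set.Ioo a b,
      deriv φ r + (n / r) * φ r - (1 - φ r ^ 2) * ψ r = 0)
    (hdd2 : ∀ r ∈ Set.Ioo a b,
      deriv ψ r - ((n - 1) / r) * ψ r + (1 - ψ r ^ 2) * φ r = 0) :
    ∀ r ∈ Set.Ioo a b,
      DifferentiableAt ℝ (deriv φ) r ∧
        deriv (deriv φ) r + deriv φ r / r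
          + (φ r / (1 - φ r ^ 2)) * ((deriv φ r) ^ 2 - n ^ 2 / r ^ 2)
          + φ r * (1 - φ r ^ 2) = 0 := by
  intro r hr
  have hr0 : r ≠ 0 := ne_of_gt (hI hr)
  have hφd := (hφ1 r hr).hasDerivAt
  have hψd := (hψ1 r hr).hasDerivAt
  set g : ℝ → ℝ := fun x => (1 - φ x ^ 2) * ψ x - (n / x) * φ x with hg_def
  have h1 : HasDerivAt (fun x => 1 - φ x ^ 2)
      (0 - 2 * φ r ^ 1 * deriv φ r) r := (hasDerivAt_const r 1).sub (hφd.pow 2)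
  have h2 : HasDerivAt (fun x => n / x) (n * (-(r ^ 2)⁻¹)) r := by
    simpa [div_eq_mul_inv] using (hasDerivAt_inv hr0).const_mul n
  have hg : HasDerivAt g
      (((0 - 2 * φ r ^ 1 * deriv φ r) * ψ r + (1 - φ r ^ 2) * deriv ψ r)
        - ((n * (-(r ^ 2)⁻¹)) * φ r + (n / r) * deriv φ r)) r :=
    ((h1.mul hψd).sub (h2.mul hφd))
  have heq : deriv φ =ᶠ[nhds r] g := by
    filter_upwards [isOpen_Ioo.mem_nhds hr] with x hx
    have := hdd1 x hx
    simp only [hg_def]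
    linarith
  have hdiff : DifferentiableAt ℝ (deriv φ) r :=
    hg.differentiableAt.congr_of_eventuallyEq heq
  refine ⟨hdiff, ?_⟩
  have hd2 : deriv (deriv φ) r =
      ((0 - 2 * φ r ^ 1 * deriv φ r) * ψ r + (1 - φ r ^ 2) * deriv ψ r)
        - ((n * (-(r ^ 2)⁻¹)) * φ r + (n / r) * deriv φ r) := by
    rw [heq.deriv_eq, hg.deriv]
  have e1 : deriv φ r = (1 - φ r ^ 2) * ψ r - (n / r) * φ r := by
    have := hdd1 r hr; linarith
  have e2 : deriv ψ r = ((n - 1) / r) * ψ r - (1 - ψ r ^ 2) * φ r := by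
    have := hdd2 r hr; linarith
  rw [hd2, e1, e2]
  have hne' := hne r hr
  field_simp
  ring
end

section
/- Theorem (Hisakado; Tracy–Widom). Let n ∈ ℝ and let I ⊆ (0,∞) be an open interval. Suppose φ : I → ℝ is twice differentiable, φ(r) ≠ 0 and φ(r)² ≠ 1 for all r ∈ I, and φ satisfies the radial complex sine-Gordon equation φ''(r) + φ'(r)/r + (φ(r)/(1 − φ(r)²))·((φ'(r))² − n²/r²) + φ(r)(1 − φ(r)²) = 0 on I. Define w(r) := ((n/r)φ(r) − φ'(r))/((1 − φ(r)²)·φ(r)), and suppose w(r) ≠ 0 for all r ∈ I. Then w satisfies the third Painlevé equation w''(r) = (w'(r))²/w(r) − w'(r)/r − (2n/r)w(r)² + (2n+2)/r + w(r)³ − 1/w(r) on I. -/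
set_option maxHeartbeats 4000000 in
set_option maxRecDepth 100000 in
/-- (Hisakado; Tracy–Widom) If `φ` solves the radial complex sine-Gordon
equation `φ'' + φ'/r + (φ/(1−φ²))((φ')² − n²/r²) + φ(1−φ²) = 0` on an open
interval `(a,b) ⊆ (0,∞)`, with `φ ≠ 0` and `φ² ≠ 1`, then
`w(r) := ((n/r)φ − φ')/((1 − φ²)φ)` (assumed nonvanishing) solves the third
Painlevé equation `w'' = (w')²/w − w'/r − (2n/r)w² + (2n+2)/r + w³ − 1/w`. -/
theorem stmt_11 (n a b : ℝ) (hI : Set.Ioo a b ⊆ Set.Ioi (0 : ℝ)) (φ : ℝ → ℝ)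
    (hφ1 : ∀ r ∈ Set.Ioo a b, DifferentiableAt ℝ φ r)
    (hφ2 : ∀ r ∈ Set.Ioo a b, DifferentiableAt ℝ (deriv φ) r)
    (hne0 : ∀ r ∈ Set.Ioo a b, φ r ≠ 0)
    (hne1 : ∀ r ∈ Set.Ioo a b, φ r ^ 2 ≠ 1)
    (hCSG : ∀ r ∈ Set.Ioo a b,
      deriv (deriv φ) r + deriv φ r / r
        + (φ r / (1 - φ r ^ 2)) * ((deriv φ r) ^ 2 - n ^ 2 / r ^ 2)
        + φ r * (1 - φ r ^ 2) = 0)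
    (w : ℝ → ℝ)
    (hw : ∀ r, w r = ((n / r) * φ r - deriv φ r) / ((1 - φ r ^ 2) * φ r))
    (hwne : ∀ r ∈ Set.Ioo a b, w r ≠ 0) :
    ∀ r ∈ Set.Ioo a b,
      deriv (deriv w) r =
        (deriv w r) ^ 2 / w r - deriv w r / r - (2 * n / r) * w r ^ 2
          + (2 * n + 2) / r + w r ^ 3 - 1 / w r := by
  have hwfun : w = fun s => ((n / s) * φ s - deriv φ s) / ((1 - φ s ^ 2) * φ s) :=
    funext hw
  have hder : ∀ s ∈ Set.Ioo a b, HasDerivAt w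
      ((s * φ s * deriv φ s * (1 - φ s ^ 2)
        + s ^ 2 * deriv φ s ^ 2 * (1 - 2 * φ s ^ 2)
        + s ^ 2 * φ s ^ 2 * (1 - φ s ^ 2) ^ 2
        - n * φ s ^ 2 * (1 - φ s ^ 2)
        + 2 * n * s * φ s ^ 3 * deriv φ s - n ^ 2 * φ s ^ 2)
        / (s ^ 2 * φ s ^ 2 * (1 - φ s ^ 2) ^ 2)) s := by
    intro s hs
    have hs0 : s ≠ 0 := ne_of_gt (hI hs)
    have hp0 : φ s ≠ 0 := hne0 s hs
    have h1m0 : 1 - φ s ^ 2 ≠ 0 := sub_ne_zero_of_ne (hne1 s hs).symm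
    have hp : HasDerivAt φ (deriv φ s) s := (hφ1 s hs).hasDerivAt
    have hq : HasDerivAt (deriv φ) (deriv (deriv φ) s) s := (hφ2 s hs).hasDerivAt
    have hpp : deriv (deriv φ) s = -(deriv φ s / s)
        - (φ s / (1 - φ s ^ 2)) * ((deriv φ s) ^ 2 - n ^ 2 / s ^ 2)
        - φ s * (1 - φ s ^ 2) := by
      have h := hCSG s hs; linarith
    have hDne : (1 - φ s ^ 2) * φ s ≠ 0 := mul_ne_zero h1m0 hp0
    have hw' := ((((hasDerivAt_const s n).div (hasDerivAt_id s) hs0).mul hp).sub hq).div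
      ((((hasDerivAt_const s 1).sub (hp.pow 2)).mul hp)) hDne
    rw [hwfun]
    refine hw'.congr_deriv ?_
    simp only [Pi.div_apply, Pi.mul_apply, Pi.sub_apply, Pi.pow_apply, id]
    rw [hpp]
    field_simp
    ring
  intro r hr
  have hr0 : r ≠ 0 := ne_of_gt (hI hr)
  have hp0 : φ r ≠ 0 := hne0 r hr
  have h1m0 : 1 - φ r ^ 2 ≠ 0 := sub_ne_zero_of_ne (hne1 r hr).symm
  have hp : HasDerivAt φ (deriv φ r) r := (hφ1 r hr).hasDerivAt
  have hq : HasDerivAt (deriv φ) (deriv (deriv φ) r) r := (hφ2 r hr).hasDerivAt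
  have hpp : deriv (deriv φ) r = -(deriv φ r / r)
      - (φ r / (1 - φ r ^ 2)) * ((deriv φ r) ^ 2 - n ^ 2 / r ^ 2)
      - φ r * (1 - φ r ^ 2) := by
    have h := hCSG r hr; linarith
  have h1m : HasDerivAt (fun x => 1 - φ x ^ 2) _ r := (hasDerivAt_const r 1).sub (hp.pow 2)
  have h1m2 : HasDerivAt (fun x => 1 - 2 * φ x ^ 2) _ r :=
    (hasDerivAt_const r 1).sub ((hp.pow 2).const_mul 2)
  have hNum : HasDerivAt (fun s => s * φ s * deriv φ s * (1 - φ s ^ 2)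
      + s ^ 2 * deriv φ s ^ 2 * (1 - 2 * φ s ^ 2)
      + s ^ 2 * φ s ^ 2 * (1 - φ s ^ 2) ^ 2
      - n * φ s ^ 2 * (1 - φ s ^ 2)
      + 2 * n * s * φ s ^ 3 * deriv φ s - n ^ 2 * φ s ^ 2) _ r :=
    ((((((((hasDerivAt_id r).mul hp).mul hq).mul h1m).add
      (((hasDerivAt_pow 2 r).mul (hq.pow 2)).mul h1m2)).add
      (((hasDerivAt_pow 2 r).mul (hp.pow 2)).mul (h1m.pow 2))).sub
      (((hp.pow 2).const_mul n).mul h1m)).add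
      ((((hasDerivAt_id r).const_mul (2 * n)).mul (hp.pow 3)).mul hq)).sub
      ((hp.pow 2).const_mul (n ^ 2))
  have hDen : HasDerivAt (fun s => s ^ 2 * φ s ^ 2 * (1 - φ s ^ 2) ^ 2) _ r :=
    ((hasDerivAt_pow 2 r).mul (hp.pow 2)).mul (h1m.pow 2)
  have hDenne : r ^ 2 * φ r ^ 2 * (1 - φ r ^ 2) ^ 2 ≠ 0 :=
    mul_ne_zero (mul_ne_zero (pow_ne_zero 2 hr0) (pow_ne_zero 2 hp0)) (pow_ne_zero 2 h1m0)
  have hg : HasDerivAt (fun s => (s * φ s * deriv φ s * (1 - φ s ^ 2)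
      + s ^ 2 * deriv φ s ^ 2 * (1 - 2 * φ s ^ 2)
      + s ^ 2 * φ s ^ 2 * (1 - φ s ^ 2) ^ 2
      - n * φ s ^ 2 * (1 - φ s ^ 2)
      + 2 * n * s * φ s ^ 3 * deriv φ s - n ^ 2 * φ s ^ 2)
      / (s ^ 2 * φ s ^ 2 * (1 - φ s ^ 2) ^ 2)) _ r := hNum.div hDen hDenne
  have hEE : deriv w =ᶠ[nhds r] (fun s => (s * φ s * deriv φ s * (1 - φ s ^ 2)
      + s ^ 2 * deriv φ s ^ 2 * (1 - 2 * φ s ^ 2)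
      + s ^ 2 * φ s ^ 2 * (1 - φ s ^ 2) ^ 2
      - n * φ s ^ 2 * (1 - φ s ^ 2)
      + 2 * n * s * φ s ^ 3 * deriv φ s - n ^ 2 * φ s ^ 2)
      / (s ^ 2 * φ s ^ 2 * (1 - φ s ^ 2) ^ 2)) := by
    filter_upwards [isOpen_Ioo.mem_nhds hr] with s hs using (hder s hs).deriv
  have hw2 : w r = (n * φ r - deriv φ r * r) / (r * ((1 - φ r ^ 2) * φ r)) := by
    rw [hw r]; field_simp
  have hA2 : n * φ r - deriv φ r * r ≠ 0 := by
    intro h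
    exact hwne r hr (by rw [hw2, h, zero_div])
  have hA3 : φ r * n - r * deriv φ r ≠ 0 := by rw [mul_comm (φ r), mul_comm r]; exact hA2
  rw [hEE.deriv_eq, hg.deriv, (hder r hr).deriv, hw2, hpp]
  simp only [Pi.div_apply, Pi.mul_apply, Pi.sub_apply, Pi.pow_apply, id]
  field_simp
  ring
end

section
/- Let κ, μ, K ∈ ℝ with κ ≠ 0 and μ ≠ 0, and let I ⊆ ℝ be an open interval. Suppose y : I → ℝ is twice differentiable, y(x) ≠ 0 for all x ∈ I, and y satisfies y''(x) = 3(y'(x))²/(2y(x)) + y(x)³/2 − (2κ²μx² − K)y(x) − 4κμx − 3μ/(2y(x)) on I. Then y is three times differentiable and satisfies the Muğan–Jrad equation y(x)²·y'''(x) = 4y(x)y'(x)y''(x) − 3(y'(x))³ + y(x)⁴y'(x) + 4κμx(y(x)y'(x) − κy(x)³) − 4κμy(x)² + 3μy'(x) on I. -/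
/-- If `y` is a nonvanishing solution of the second-order first integral
`y'' = 3(y')²/(2y) + y³/2 − (2κ²μx² − K)y − 4κμx − 3μ/(2y)` on an open
interval `(a,b)`, with `κ ≠ 0` and `μ ≠ 0`, then `y` is three times
differentiable and solves the Muğan–Jrad equation
`y²y''' = 4yy'y'' − 3(y')³ + y⁴y' + 4κμx(yy' − κy³) − 4κμy² + 3μy'`. -/
theorem stmt_12 (κ μ K a b : ℝ) (hκ : κ ≠ 0) (hμ : μ ≠ 0) (y : ℝ → ℝ)
    (hy1 : ∀ x ∈ Set.Ioo a b, DifferentiableAt ℝ y x)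
    (hy2 : ∀ x ∈ Set.Ioo a b, DifferentiableAt ℝ (deriv y) x)
    (hyne : ∀ x ∈ Set.Ioo a b, y x ≠ 0)
    (hode : ∀ x ∈ Set.Ioo a b,
      deriv (deriv y) x =
        3 * (deriv y x) ^ 2 / (2 * y x) + y x ^ 3 / 2
          - (2 * κ ^ 2 * μ * x ^ 2 - K) * y x - 4 * κ * μ * x
          - 3 * μ / (2 * y x)) :
    ∀ x ∈ Set.Ioo a b,
      DifferentiableAt ℝ (deriv (deriv y)) x ∧
        y x ^ 2 * deriv (deriv (deriv y)) x =
          4 * y x * deriv y x * deriv (deriv y) x - 3 * (deriv y x) ^ 3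
            + y x ^ 4 * deriv y x
            + 4 * κ * μ * x * (y x * deriv y x - κ * y x ^ 3)
            - 4 * κ * μ * y x ^ 2 + 3 * μ * deriv y x := by
  intro x hx
  have hdy : DifferentiableAt ℝ y x := hy1 x hx
  have hdy' : DifferentiableAt ℝ (deriv y) x := hy2 x hx
  have hne : y x ≠ 0 := hyne x hx
  have hne2 : 2 * y x ≠ 0 := by simp [hne]
  set f : ℝ → ℝ := fun t =>
    3 * (deriv y t) ^ 2 / (2 * y t) + y t ^ 3 / 2
      - (2 * κ ^ 2 * μ * t ^ 2 - K) * y t - 4 * κ * μ * t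
      - 3 * μ / (2 * y t) with hf_def
  have heq : deriv (deriv y) =ᶠ[nhds x] f :=
    Filter.eventuallyEq_of_mem (isOpen_Ioo.mem_nhds hx) hode
  have hy0 : HasDerivAt y (deriv y x) x := hdy.hasDerivAt
  have h1 : HasDerivAt (deriv y) (deriv (deriv y) x) x := hdy'.hasDerivAt
  have ht1 : HasDerivAt (fun t => 3 * (deriv y t) ^ 2 / (2 * y t))
      ((3 * (2 * deriv y x ^ (2-1) * deriv (deriv y) x) * (2 * y x)
        - 3 * (deriv y x) ^ 2 * (2 * deriv y x)) / (2 * y x) ^ 2) x :=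
    ((h1.pow 2).const_mul 3).div (hy0.const_mul 2) hne2
  have ht2 : HasDerivAt (fun t => y t ^ 3 / 2)
      ((3 * y x ^ (3-1) * deriv y x) / 2) x := (hy0.pow 3).div_const 2
  have ht3 : HasDerivAt (fun t => (2 * κ ^ 2 * μ * t ^ 2 - K) * y t)
      (2 * κ ^ 2 * μ * (2 * x) * y x
        + (2 * κ ^ 2 * μ * x ^ 2 - K) * deriv y x) x := by
    have := (((((hasDerivAt_id x).pow 2).const_mul (2*κ^2*μ)).sub_const K).mul hy0)
    simpa [Pi.mul_def] using this
  have ht4 : HasDerivAt (fun t => 4 * κ * μ * t) (4 * κ * μ * 1) x :=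
    (hasDerivAt_id x).const_mul (4*κ*μ)
  have ht5 : HasDerivAt (fun t => 3 * μ / (2 * y t))
      ((0 * (2 * y x) - 3 * μ * (2 * deriv y x)) / (2 * y x) ^ 2) x :=
    (hasDerivAt_const x (3*μ)).div (hy0.const_mul 2) hne2
  have hf : HasDerivAt f
      (((3 * (2 * deriv y x ^ (2-1) * deriv (deriv y) x) * (2 * y x)
        - 3 * (deriv y x) ^ 2 * (2 * deriv y x)) / (2 * y x) ^ 2
        + (3 * y x ^ (3-1) * deriv y x) / 2
        - (2 * κ ^ 2 * μ * (2 * x) * y x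
          + (2 * κ ^ 2 * μ * x ^ 2 - K) * deriv y x)
        - 4 * κ * μ * 1)
        - (0 * (2 * y x) - 3 * μ * (2 * deriv y x)) / (2 * y x) ^ 2) x :=
    (((ht1.add ht2).sub ht3).sub ht4).sub ht5
  refine ⟨hf.differentiableAt.congr_of_eventuallyEq heq, ?_⟩
  have h3 : deriv (deriv (deriv y)) x = _ := heq.deriv_eq.trans hf.deriv
  rw [h3, hode x hx]
  field_simp
  ring
end

section
/- Let κ, C₁ ∈ ℝ and let I ⊆ ℝ be an open interval. Suppose v : I → ℝ is three times differentiable and satisfies v'''(x) − 3C₁v(x)v'(x) = 2κx·v'(x) + κv(x) on I. Then the function x ↦ v(x)v''(x) − (v'(x))²/2 − C₁v(x)³ − κx·v(x)² is constant on I; that is, there exists C₂ ∈ ℝ such that v(x)v''(x) = (v'(x))²/2 + C₁v(x)³ + κx·v(x)² + C₂ for all x ∈ I. -/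
/-- If `v` solves `v''' − 3C₁vv' = 2κxv' + κv` on an open interval `(a,b)`,
then `v v'' − (v')²/2 − C₁v³ − κxv²` is constant on `(a,b)`: there exists `C₂`
with `v v'' = (v')²/2 + C₁v³ + κxv² + C₂` on `(a,b)`. -/
theorem stmt_16 (κ C₁ a b : ℝ) (v : ℝ → ℝ)
    (hv1 : ∀ x ∈ Set.Ioo a b, DifferentiableAt ℝ v x)
    (hv2 : ∀ x ∈ Set.Ioo a b, DifferentiableAt ℝ (deriv v) x)
    (hv3 : ∀ x ∈ Set.Ioo a b, DifferentiableAt ℝ (deriv (deriv v)) x)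
    (hode : ∀ x ∈ Set.Ioo a b,
      deriv (deriv (deriv v)) x - 3 * C₁ * v x * deriv v x =
        2 * κ * x * deriv v x + κ * v x) :
    ∃ C₂ : ℝ, ∀ x ∈ Set.Ioo a b,
      v x * deriv (deriv v) x =
        (deriv v x) ^ 2 / 2 + C₁ * v x ^ 3 + κ * x * v x ^ 2 + C₂ := by
  rcases Set.eq_empty_or_nonempty (Set.Ioo a b) with he | ⟨x₀, hx₀⟩
  · exact ⟨0, fun x hx => absurd hx (by simp [he])⟩
  set F : ℝ → ℝ := fun x =>
    v x * deriv (deriv v) x - (deriv v x) ^ 2 / 2 - C₁ * v x ^ 3 - κ * x * v x ^ 2 with hF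
  have hderiv : ∀ x ∈ Set.Ioo a b, HasDerivAt F 0 x := by
    intro x hx
    have h1 : HasDerivAt v (deriv v x) x := (hv1 x hx).hasDerivAt
    have h2 : HasDerivAt (deriv v) (deriv (deriv v) x) x := (hv2 x hx).hasDerivAt
    have h3 : HasDerivAt (deriv (deriv v)) (deriv (deriv (deriv v)) x) x :=
      (hv3 x hx).hasDerivAt
    have hid : HasDerivAt (fun x : ℝ => x) 1 x := hasDerivAt_id x
    have H : HasDerivAt F
        (deriv v x * deriv (deriv v) x + v x * deriv (deriv (deriv v)) x
          - (2 * deriv v x ^ (2-1) * deriv (deriv v) x) / 2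
          - C₁ * (3 * v x ^ (3-1) * deriv v x)
          - (κ * 1 * v x ^ 2 + κ * x * (2 * v x ^ (2-1) * deriv v x))) x := by
      exact ((((h1.mul h3).sub ((h2.pow 2).div_const 2)).sub
        ((h1.pow 3).const_mul C₁)).sub
        (((hid.const_mul κ).mul (h1.pow 2))))
    have hode' := hode x hx
    convert H using 1
    have : deriv (deriv (deriv v)) x = 3 * C₁ * v x * deriv v x
        + 2 * κ * x * deriv v x + κ * v x := by linarith
    rw [this]; ring
  have hC : ∀ x ∈ Set.Ioo a b, F x = F x₀ := by
    intro x hx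
    have hconv : Convex ℝ (Set.Ioo a b) := convex_Ioo a b
    refine hconv.is_const_of_fderivWithin_eq_zero
      (fun y hy => ((hderiv y hy).differentiableAt).differentiableWithinAt)
      (fun y hy => ?_) hx hx₀
    rw [fderivWithin_eq_fderiv (isOpen_Ioo.uniqueDiffOn y hy)
      (hderiv y hy).differentiableAt]
    rw [(hderiv y hy).hasFDerivAt.fderiv]; ext; simp
  refine ⟨F x₀, fun x hx => ?_⟩
  have := hC x hx
  simp only [hF] at this ⊢
  linarith
end

section
/- Let κ ∈ ℝ and let I ⊆ ℝ be an open interval. Suppose v : I → ℝ is three times differentiable and satisfies v'''(x) = (6v(x) + 2κx)v'(x) + κv(x) on I. Then the function x ↦ v(x)v''(x) − (v'(x))²/2 − 2v(x)³ − κx·v(x)² is constant on I; that is, there exists C ∈ ℝ such that v(x)v''(x) = (v'(x))²/2 + 2v(x)³ + κx·v(x)² + C for all x ∈ I. -/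
/-- If `v` solves `v''' = (6v + 2κx)v' + κv` on an open interval `(a,b)`,
then `v v'' − (v')²/2 − 2v³ − κxv²` is constant on `(a,b)`: there exists `C`
with `v v'' = (v')²/2 + 2v³ + κxv² + C` on `(a,b)`. -/
theorem stmt_19 (κ a b : ℝ) (v : ℝ → ℝ)
    (hv1 : ∀ x ∈ Set.Ioo a b, DifferentiableAt ℝ v x)
    (hv2 : ∀ x ∈ Set.Ioo a b, DifferentiableAt ℝ (deriv v) x)
    (hv3 : ∀ x ∈ Set.Ioo a b, DifferentiableAt ℝ (deriv (deriv v)) x)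
    (hode : ∀ x ∈ Set.Ioo a b,
      deriv (deriv (deriv v)) x =
        (6 * v x + 2 * κ * x) * deriv v x + κ * v x) :
    ∃ C : ℝ, ∀ x ∈ Set.Ioo a b,
      v x * deriv (deriv v) x =
        (deriv v x) ^ 2 / 2 + 2 * v x ^ 3 + κ * x * v x ^ 2 + C := by
  rcases Set.eq_empty_or_nonempty (Set.Ioo a b) with h | ⟨x0, hx0⟩
  · exact ⟨0, fun x hx => absurd hx (by simp [h])⟩
  set F : ℝ → ℝ := fun x =>
    v x * deriv (deriv v) x - (deriv v x) ^ 2 / 2 - 2 * v x ^ 3 - κ * x * v x ^ 2 with hF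
  have key : ∀ x ∈ Set.Ioo a b, HasDerivAt F 0 x := by
    intro x hx
    have h1 := (hv1 x hx).hasDerivAt
    have h2 := (hv2 x hx).hasDerivAt
    have h3 := (hv3 x hx).hasDerivAt
    rw [hode x hx] at h3
    have hcomb := (((h1.mul h3).sub ((h2.pow 2).div_const 2)).sub
      ((h1.pow 3).const_mul 2)).sub
      (((hasDerivAt_id x).const_mul κ).mul (h1.pow 2))
    refine hcomb.congr_deriv ?_
    simp only [Nat.cast_ofNat, pow_one, id, Pi.pow_apply, Nat.add_one_sub_one, Nat.reduceSub]
    ring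
  have hderiv0 : ∀ y ∈ Set.Ioo a b, fderivWithin ℝ F (Set.Ioo a b) y = 0 := by
    intro y hy
    rw [fderivWithin_of_isOpen isOpen_Ioo hy]
    have := (key y hy).hasFDerivAt.fderiv
    rw [this]
    ext
    simp
  have hdiff : DifferentiableOn ℝ F (Set.Ioo a b) :=
    fun y hy => ((key y hy).differentiableAt).differentiableWithinAt
  refine ⟨F x0, fun x hx => ?_⟩
  have hconst : F x = F x0 :=
    (convex_Ioo a b).is_const_of_fderivWithin_eq_zero hdiff hderiv0 hx hx0
  simp only [hF] at hconst ⊢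
  linarith
end
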